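/- arXiv:math/0505262 — 2 statements merged into one kernel-verified Lean document; each statement's English description precedes it below -/
import Mathlib

section
/- The poset 𝔅𝔅𝔇 is Y-multiranked by the sorting map: if Q covers P in 𝔅𝔅𝔇, then the weight of Q equals the weight of P plus 1, and for every i ≥ 1 the i-th largest part of P (taken as 0 when i exceeds the width of P) is at most the i-th largest part of Q; that is, the decreasing rearrangement mw*(Q) covers mw*(P) in Young's lattice. Moreover, every covering pair λ ⋖ μ of partitions in Young's lattice is of the form mw*(P) ⋖ mw*(Q) for some covering pair Q ⋗ P in 𝔅𝔅𝔇, and mw* maps the set of compositions onto the set of all partitions. -/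
/-- A composition: a finite list of positive integers. -/
def IsComposition (P : List ℕ) : Prop := ∀ x ∈ P, 0 < x

/-- Covering relation of the poset 𝔅𝔅𝔇: insert a part 1 at any position,
or increase one part by 1. -/
def coverBBD (P Q : List ℕ) : Prop :=
  (∃ i, i ≤ P.length ∧ Q = P.take i ++ 1 :: P.drop i) ∨
  ∃ j, j < P.length ∧ Q = P.set j (P.getD j 0 + 1)

/-- `mwStar P` is the decreasing rearrangement of `P`. -/
def mwStar (P : List ℕ) : List ℕ := ((P : Multiset ℕ).sort (· ≤ ·)).reverse

/-- A partition: a weakly decreasing list of positive integers. -/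
def IsPartition (l : List ℕ) : Prop := (∀ x ∈ l, 0 < x) ∧ l.Pairwise (· ≥ ·)

/-- Covering in Young's lattice: the weight goes up by one and every part weakly increases
(parts beyond the width are taken to be `0`). -/
def YoungCover (lam mu : List ℕ) : Prop :=
  mu.sum = lam.sum + 1 ∧ ∀ i, lam.getD i 0 ≤ mu.getD i 0

/-
Sorting does not change how many parts are `≥ m`, and in a weakly decreasing list the `i`-th
part is `≥ m` (for `m ≥ 1`) exactly when more than `i` parts are `≥ m`. So `mw*(P) ≤ mw*(Q)`
partwise as soon as, for every `m`, `Q` has at least as many parts `≥ m` as `P`, which is clear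
for both kinds of covers in 𝔅𝔅𝔇. Conversely, if `μ` covers `λ` in Young's lattice then `μ`
arises from `λ` by raising one part or appending a part `1`, both covers in 𝔅𝔅𝔇, and
partitions are their own sortings.
-/

namespace List

lemma le_getD_iff_lt_countP {l : List ℕ} (hl : l.Pairwise (· ≥ ·)) {m : ℕ} (hm : 0 < m)
    (i : ℕ) : m ≤ l.getD i 0 ↔ i < l.countP (m ≤ ·) := by
  induction l generalizing i with
  | nil => simp; omega
  | cons a t ih =>
    rw [pairwise_cons] at hl
    by_cases hma : m ≤ a
    · cases i with
      | zero => simp [hma]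
      | succ i => simpa [hma] using ih hl.2 i
    · have hsmall : ∀ x ∈ t, ¬ m ≤ x := fun x hx => by have := hl.1 x hx; omega
      have hcount : t.countP (m ≤ ·) = 0 := countP_eq_zero.2 (by simpa using hsmall)
      cases i with
      | zero => simp [hma, hcount]
      | succ i => simpa [hma, hcount] using ih hl.2 i

lemma getD_le_getD_of_countP_le {l l' : List ℕ} (hl : l.Pairwise (· ≥ ·))
    (hl' : l'.Pairwise (· ≥ ·)) (hc : ∀ m, l.countP (m ≤ ·) ≤ l'.countP (m ≤ ·)) (i : ℕ) :
    l.getD i 0 ≤ l'.getD i 0 := by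
  rcases Nat.eq_zero_or_pos (l.getD i 0) with h0 | hpos
  · omega
  · exact (le_getD_iff_lt_countP hl' hpos i).2 <|
      ((le_getD_iff_lt_countP hl hpos i).1 le_rfl).trans_le (hc _)

lemma sum_le_sum_of_getD_le {l l' : List ℕ} (h : ∀ i, l.getD i 0 ≤ l'.getD i 0) :
    l.sum ≤ l'.sum := by
  induction l generalizing l' with
  | nil => simp
  | cons a t ih =>
    have htail := ih (l' := l'.tail) fun i => by cases l' <;> simpa using h (i + 1)
    cases l' with
    | nil =>
      obtain rfl : a = 0 := by simpa using h 0
      simpa using htail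
    | cons b s => simpa using Nat.add_le_add (by simpa using h 0) htail

lemma eq_of_getD_le_of_sum_eq {l l' : List ℕ} (hl : ∀ x ∈ l, 0 < x) (hl' : ∀ x ∈ l', 0 < x)
    (h : ∀ i, l.getD i 0 ≤ l'.getD i 0) (hs : l.sum = l'.sum) : l = l' := by
  induction l generalizing l' with
  | nil =>
    cases l' with
    | nil => rfl
    | cons b s => have := hl' b (by simp); simp at hs; omega
  | cons a t ih =>
    cases l' with
    | nil =>
      have ha := hl a (by simp)
      have : a = 0 := by simpa using h 0
      omega
    | cons b s =>
      have hab : a ≤ b := by simpa using h 0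
      have htail : ∀ i, t.getD i 0 ≤ s.getD i 0 := fun i => by simpa using h (i + 1)
      have := sum_le_sum_of_getD_le htail
      simp only [sum_cons] at hs
      obtain rfl : a = b := by omega
      rw [ih (fun x hx => hl x (by simp [hx])) (fun x hx => hl' x (by simp [hx])) htail
        (by omega)]

end List

open List

lemma mwStar_perm (P : List ℕ) : mwStar P ~ P :=
  (reverse_perm _).trans <| by rw [← Multiset.coe_eq_coe, Multiset.sort_eq]

lemma mwStar_pairwise (P : List ℕ) : (mwStar P).Pairwise (· ≥ ·) := by
  rw [mwStar, pairwise_reverse]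
  exact Multiset.pairwise_sort _ _

lemma mwStar_eq_self {l : List ℕ} (h : l.Pairwise (· ≥ ·)) : mwStar l = l :=
  (mwStar_perm l).eq_of_pairwise' (mwStar_pairwise l) h

lemma youngCover_mwStar_of_countP_le {P Q : List ℕ} (hs : Q.sum = P.sum + 1)
    (hc : ∀ m, P.countP (m ≤ ·) ≤ Q.countP (m ≤ ·)) : YoungCover (mwStar P) (mwStar Q) := by
  refine ⟨by rw [(mwStar_perm Q).sum_eq, (mwStar_perm P).sum_eq, hs], ?_⟩
  refine getD_le_getD_of_countP_le (mwStar_pairwise P) (mwStar_pairwise Q) fun m => ?_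
  rw [(mwStar_perm P).countP_eq, (mwStar_perm Q).countP_eq]
  exact hc m

lemma coverBBD.sum_eq_and_countP_le {P Q : List ℕ} (h : coverBBD P Q) :
    Q.sum = P.sum + 1 ∧ ∀ m, P.countP (m ≤ ·) ≤ Q.countP (m ≤ ·) := by
  rcases h with ⟨i, -, rfl⟩ | ⟨j, hj, rfl⟩
  · have hperm : P.take i ++ 1 :: P.drop i ~ 1 :: P := by
      simpa using (perm_middle (l₁ := P.take i) (l₂ := P.drop i) (a := 1))
    refine ⟨by simp [hperm.sum_eq, add_comm], fun m => ?_⟩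
    rw [hperm.countP_eq, countP_cons]
    omega
  · have hP := getElem_cons_eraseIdx_perm hj
    have hQ := set_perm_cons_eraseIdx hj (P[j] + 1)
    rw [getD_eq_getElem _ _ hj]
    refine ⟨by rw [hQ.sum_eq, ← hP.sum_eq, sum_cons, sum_cons]; omega, fun m => ?_⟩
    rw [hQ.countP_eq, ← hP.countP_eq, countP_cons, countP_cons]
    simp only [decide_eq_true_eq]
    split_ifs <;> omega

lemma coverBBD.cons {P Q : List ℕ} (h : coverBBD P Q) (a : ℕ) : coverBBD (a :: P) (a :: Q) := by
  rcases h with ⟨i, hi, rfl⟩ | ⟨j, hj, rfl⟩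
  · exact Or.inl ⟨i + 1, by simpa using hi, by simp⟩
  · exact Or.inr ⟨j + 1, by simpa using hj, by simp⟩

lemma coverBBD_of_getD_le {lam mu : List ℕ} (hlam : ∀ x ∈ lam, 0 < x) (hmu : ∀ x ∈ mu, 0 < x)
    (hs : mu.sum = lam.sum + 1) (h : ∀ i, lam.getD i 0 ≤ mu.getD i 0) : coverBBD lam mu := by
  induction lam generalizing mu with
  | nil =>
    obtain rfl : mu = [1] := by
      match mu, hmu, hs with
      | [b], hmu, hs => simpa using hs
      | b :: c :: s, hmu, hs =>
        have := hmu b (by simp)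
        have := hmu c (by simp)
        simp at hs
        omega
    exact Or.inl ⟨0, le_rfl, rfl⟩
  | cons a t ih =>
    obtain _ | ⟨b, s⟩ := mu
    · simp at hs
    have hab : a ≤ b := by simpa using h 0
    have htail : ∀ i, t.getD i 0 ≤ s.getD i 0 := fun i => by simpa using h (i + 1)
    have ht := fun x hx => hlam x (mem_cons_of_mem a hx)
    have hs' := fun x hx => hmu x (mem_cons_of_mem b hx)
    have := sum_le_sum_of_getD_le htail
    simp only [sum_cons] at hs
    rcases hab.eq_or_lt with rfl | hlt
    · exact (ih ht hs' (by omega) htail).cons a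
    · obtain rfl : t = s := eq_of_getD_le_of_sum_eq ht hs' htail (by omega)
      obtain rfl : b = a + 1 := by omega
      exact Or.inr ⟨0, by simp, rfl⟩

theorem stmt2 :
    (∀ P Q : List ℕ, IsComposition P → IsComposition Q → coverBBD P Q →
      YoungCover (mwStar P) (mwStar Q)) ∧
    (∀ lam mu : List ℕ, IsPartition lam → IsPartition mu → YoungCover lam mu →
      ∃ P Q : List ℕ, IsComposition P ∧ IsComposition Q ∧ coverBBD P Q ∧
        mwStar P = lam ∧ mwStar Q = mu) ∧
    (∀ lam : List ℕ, IsPartition lam → ∃ P : List ℕ, IsComposition P ∧ mwStar P = lam) := by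
  refine ⟨fun P Q _ _ hPQ => ?_, fun lam mu hlam hmu ⟨hs, hle⟩ => ?_,
    fun lam hlam => ⟨lam, hlam.1, mwStar_eq_self hlam.2⟩⟩
  · obtain ⟨hs, hc⟩ := hPQ.sum_eq_and_countP_le
    exact youngCover_mwStar_of_countP_le hs hc
  · exact ⟨lam, mu, hlam.1, hmu.1, coverBBD_of_getD_le hlam.1 hmu.1 hs hle,
      mwStar_eq_self hlam.2, mwStar_eq_self hmu.2⟩
end

section
/- Let α be a composition with r parts and let f_k = f_k^α[𝔑] be the generating function in ℤ[[x_1,…,x_k]] for saturated chains in 𝔑 of width k starting from α. Then f_k = 0 for k < r, and f_r = v(α) + (x_1 + ⋯ + x_r)·f_r. For k > r: if α is not all-ones then f_k = x_1·Λ(f_{k−1}) + x_k·f_{k−1} + (x_1 + ⋯ + x_k)·f_k, and if α is all-ones then f_k = x_1·Λ(f_{k−1}) + x_k·f_{k−1} + (x_1 + ⋯ + x_k)·f_k − x_1x_2⋯x_k. -/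
/-- The number of saturated chains from `α` to `Q` with respect to the covering
relation `cover`: chains are recorded as the list of their elements. -/
noncomputable def numChains (cover : List ℕ → List ℕ → Prop) (α Q : List ℕ) : ℕ :=
  Nat.card {c : List (List ℕ) //
    c.Chain' cover ∧ c.head? = some α ∧ c.getLast? = some Q}

open Classical in
/-- The generating function `f_k^α`: the formal power series in the variables
`x_1, …, x_k` (variables indexed by positive naturals) whose coefficient of
`x_1^{q_1} ⋯ x_k^{q_k}` (all `q_i ≥ 1`) is the number of saturated chains from `α`
to the composition `(q_1, …, q_k)`; all other coefficients are `0`. -/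
noncomputable def genF (cover : List ℕ → List ℕ → Prop) (α : List ℕ) (k : ℕ) :
    MvPowerSeries ℕ ℤ :=
  fun m =>
    if (∀ i, m i ≠ 0 ↔ (1 ≤ i ∧ i ≤ k)) then
      (numChains cover α ((List.range k).map (fun i => m (i + 1))) : ℤ)
    else 0

/-- The power series `v(α) = x_1^{a_1} ⋯ x_s^{a_s}` for a composition `α = (a_1,…,a_s)`. -/
noncomputable def vPS (α : List ℕ) : MvPowerSeries ℕ ℤ :=
  ∏ i ∈ Finset.range α.length, (MvPowerSeries.X (i + 1) : MvPowerSeries ℕ ℤ) ^ α.getD i 0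

open Classical in
/-- Renaming of variables along an injective map, for multivariate power series. -/
noncomputable def psRename (σ : ℕ → ℕ) (hσ : Function.Injective σ)
    (f : MvPowerSeries ℕ ℤ) : MvPowerSeries ℕ ℤ :=
  fun m =>
    if (∀ i ∈ m.support, i ∈ Set.range σ) then
      f (Finsupp.comapDomain σ m hσ.injOn)
    else 0

/-- `Λ`: every variable index is shifted up by one, `Λ(f)(x_1,…,x_k) = f(x_2,…,x_k)`. -/
noncomputable def LamPS : MvPowerSeries ℕ ℤ → MvPowerSeries ℕ ℤ :=
  psRename (· + 1) (add_left_injective 1)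

/-- `Λ_i`: each variable `x_m` with `m ≥ i` is replaced by `x_{m+1}`. -/
noncomputable def LamIPS (i : ℕ) : MvPowerSeries ℕ ℤ → MvPowerSeries ℕ ℤ :=
  psRename (fun m => if i ≤ m then m + 1 else m)
    (fun a b h => by dsimp at h; split_ifs at h <;> omega)

/-- `Δ_i^d(f)`: the sum of the terms of `f` whose degree in `x_i` is exactly `d`. -/
noncomputable def DeltaPS (i d : ℕ) (f : MvPowerSeries ℕ ℤ) : MvPowerSeries ℕ ℤ :=
  fun m => if m i = d then f m else 0

/-- Covering relation of the poset 𝔑: prepend a part 1, append a part 1,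
or increase one part by 1. -/
def coverN (P Q : List ℕ) : Prop :=
  Q = 1 :: P ∨ Q = P ++ [1] ∨ ∃ j, j < P.length ∧ Q = P.set j (P.getD j 0 + 1)


/-!
A chain ending at `Q` is a chain ending at an element covered by `Q`, followed by `Q`, so the
number of chains from `α` to `Q` is `[Q = α]` plus the sum of these numbers over the elements
covered by `Q`. For a composition `Q` of width `k` these are: `Q` without its first part if that
part is 1, `Q` without its last part if that part is 1, and `Q` with one part decreased by 1.
At the monomial `x^Q` the three kinds contribute the coefficients of `x_1 Λ(f_{k-1})`,
`x_k f_{k-1}` and `(x_1 + ⋯ + x_k) f_k`. The first two coincide exactly when `Q` is all-ones,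
and that overlap is counted twice on the right: it contributes the number of chains from `α`
to `(1, …, 1)` of width `k - 1`, which is 1 if `α` is all-ones and 0 otherwise, because a part
`≥ 2` never disappears along a chain. Chains never get shorter, which gives `f_k = 0` for
`k < r` and removes the width-`(k-1)` terms when `k = r`.
-/

section Chains

variable {β : Type*} {cover : β → β → Prop} {a b : β}

variable (cover) in
def chainSet (a b : β) : Set (List β) :=
  {c | c.IsChain cover ∧ c.head? = some a ∧ c.getLast? = some b}

theorem numChains_eq_ncard (cover : List ℕ → List ℕ → Prop) (α Q : List ℕ) :
    numChains cover α Q = (chainSet cover α Q).ncard := rfl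

theorem mem_chainSet_iff {c : List β} :
    c ∈ chainSet cover a b ↔
      (a = b ∧ c = [b]) ∨ ∃ p, cover p b ∧ ∃ c' ∈ chainSet cover a p, c = c' ++ [b] := by
  constructor
  · rintro ⟨hchain, hhead, hlast⟩
    have hsplit : c.dropLast ++ [b] = c := List.dropLast_append_getLast? b hlast
    rcases eq_or_ne c.dropLast [] with hnil | hne
    · rw [hnil, List.nil_append] at hsplit
      subst hsplit
      exact Or.inl ⟨by simpa [eq_comm] using hhead, rfl⟩
    · rw [← hsplit, List.isChain_append] at hchain
      rw [← hsplit, List.head?_append_of_ne_nil _ hne] at hhead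
      have hlast' := List.getLast?_eq_some_getLast hne
      exact Or.inr ⟨_, hchain.2.2 _ hlast' b rfl, c.dropLast, ⟨hchain.1, hhead, hlast'⟩,
        hsplit.symm⟩
  · rintro (⟨rfl, rfl⟩ | ⟨p, hp, c', ⟨hchain, hhead, hlast⟩, rfl⟩)
    · exact ⟨List.isChain_singleton _, rfl, rfl⟩
    · have hne : c' ≠ [] := by rintro rfl; simp at hhead
      refine ⟨List.isChain_append.2 ⟨hchain, List.isChain_singleton _, ?_⟩,
        by rwa [List.head?_append_of_ne_nil _ hne], List.getLast?_concat⟩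
      rintro x hx y ⟨⟩
      rw [hlast, Option.mem_some_iff] at hx
      exact hx ▸ hp

theorem chainSet_eq_union (a b : β) :
    chainSet cover a b =
      {c | a = b ∧ c = [b]} ∪ ⋃ p ∈ {p | cover p b}, (· ++ [b]) '' chainSet cover a p := by
  ext c
  rw [mem_chainSet_iff]
  simp only [Set.mem_union, Set.mem_ofPred_eq, Set.mem_iUnion, Set.mem_image, exists_prop]
  grind

theorem chainSet_finite (rank : β → ℕ) (hrank : ∀ p q, cover p q → rank p < rank q)
    (hpred : ∀ q, {p | cover p q}.Finite) (a b : β) : (chainSet cover a b).Finite := by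
  induction h : rank b using Nat.strong_induction_on generalizing b with
  | _ n ih =>
    rw [chainSet_eq_union]
    refine ((Set.finite_singleton [b]).subset ?_).union <|
      (hpred b).biUnion fun p hp => (ih _ (h ▸ hrank p b hp) p rfl).image _
    rintro c ⟨-, rfl⟩
    rfl

theorem ncard_chainSet [DecidableEq β] (s : Finset β) (hs : ∀ p, p ∈ s ↔ cover p b)
    (hfin : ∀ p, (chainSet cover a p).Finite) :
    (chainSet cover a b).ncard =
      (if a = b then 1 else 0) + ∑ p ∈ s, (chainSet cover a p).ncard := by
  have hpreds : {p | cover p b} = (s : Set β) := by ext p; simp [hs]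
  have hne_nil : ∀ p, ∀ c ∈ chainSet cover a p, c ≠ [] := by
    rintro p c ⟨-, hhead, -⟩ rfl
    simp at hhead
  have hdisj : (s : Set β).PairwiseDisjoint fun p => (· ++ [b]) '' chainSet cover a p := by
    intro p _ p' _ hpp'
    refine Set.disjoint_left.2 ?_
    rintro _ ⟨c, ⟨-, -, hc⟩, rfl⟩ ⟨c', ⟨-, -, hc'⟩, heq⟩
    rw [List.append_left_injective _ heq] at hc'
    exact hpp' (Option.some_injective _ (hc.symm.trans hc'))
  rw [chainSet_eq_union, hpreds, Set.ncard_union_eq ?_ ?_ ?_, Set.Finite.ncard_biUnion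
    s.finite_toSet (fun p _ => (hfin p).image _) hdisj, finsum_mem_coe_finset]
  · congr 1
    · by_cases hab : a = b <;> simp [hab]
    · exact Finset.sum_congr rfl fun p _ =>
        Set.ncard_image_of_injective _ (List.append_left_injective [b])
  · refine Set.disjoint_left.2 ?_
    rintro _ ⟨-, rfl⟩ hmem
    simp only [Set.mem_iUnion, Set.mem_image] at hmem
    obtain ⟨p, -, c, hc, heq⟩ := hmem
    exact hne_nil p c hc (by simpa using heq)
  · exact (Set.finite_singleton [b]).subset fun c ⟨_, hc⟩ => hc
  · exact s.finite_toSet.biUnion fun p _ => (hfin p).image _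

theorem numChains_eq_zero_of_invariant {cover : List ℕ → List ℕ → Prop} (I : List ℕ → Prop)
    (hI : ∀ P Q, cover P Q → I P → I Q) {α Q : List ℕ} (hα : I α) (hQ : ¬ I Q) :
    numChains cover α Q = 0 := by
  have hreach : ∀ P, Relation.ReflTransGen cover α P → I P := fun P h => by
    induction h with
    | refl => exact hα
    | tail _ hcov ih => exact hI _ _ hcov ih
  rw [numChains_eq_ncard, Set.eq_empty_of_forall_notMem (s := chainSet cover α Q) ?_,
    Set.ncard_empty]
  rintro (_ | ⟨c₀, c⟩) ⟨hchain, hhead, hlast⟩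
  · simp at hhead
  · obtain rfl : c₀ = α := by simpa using hhead
    rw [List.getLast?_eq_some_getLast (List.cons_ne_nil _ _), Option.some_inj] at hlast
    exact hQ (hreach Q (hlast ▸
      List.relationReflTransGen_of_exists_isChain _ hchain (List.cons_ne_nil _ _)))

end Chains

theorem List.eq_replicate_of_cons_eq_append {β : Type*} {a : β} :
    ∀ {t : List β}, a :: t = t ++ [a] → t = List.replicate t.length a
  | [], _ => rfl
  | b :: t, h => by
    obtain ⟨rfl, h⟩ := List.cons_eq_cons.1 h
    rw [List.length_cons, List.replicate_succ, ← List.eq_replicate_of_cons_eq_append h]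

theorem isComposition_replicate_one (n : ℕ) : IsComposition (List.replicate n 1) :=
  fun x hx => by rw [List.eq_of_mem_replicate hx]; exact Nat.one_pos

section CoverN

theorem sum_eq_of_coverN {P Q : List ℕ} (h : coverN P Q) : Q.sum = P.sum + 1 := by
  rcases h with rfl | rfl | ⟨j, hj, rfl⟩
  · simp [add_comm]
  · simp
  · have hset := List.sum_set P j (P[j] + 1)
    have hself := List.sum_set P j P[j]
    rw [List.set_getElem_self] at hself
    rw [List.getD_eq_getElem _ _ hj]
    simp only [if_pos hj] at hset hself
    omega

theorem length_le_of_coverN {P Q : List ℕ} (h : coverN P Q) : P.length ≤ Q.length := by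
  rcases h with rfl | rfl | ⟨j, hj, rfl⟩ <;> simp

theorem IsComposition.of_coverN {P Q : List ℕ} (h : coverN P Q) (hP : IsComposition P) :
    IsComposition Q := by
  rcases h with rfl | rfl | ⟨j, hj, rfl⟩ <;> intro x hx
  · rcases List.mem_cons.1 hx with rfl | hx
    exacts [Nat.one_pos, hP x hx]
  · rcases List.mem_append.1 hx with hx | hx
    exacts [hP x hx, by simp_all]
  · rcases List.mem_or_eq_of_mem_set hx with hx | rfl
    exacts [hP x hx, Nat.succ_pos _]

theorem exists_two_le_of_coverN {P Q : List ℕ} (h : coverN P Q) (hP : IsComposition P)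
    (hbig : ∃ x ∈ P, 2 ≤ x) : ∃ x ∈ Q, 2 ≤ x := by
  obtain ⟨x, hx, h2⟩ := hbig
  rcases h with rfl | rfl | ⟨j, hj, rfl⟩
  · exact ⟨x, List.mem_cons_of_mem _ hx, h2⟩
  · exact ⟨x, List.mem_append_left _ hx, h2⟩
  · refine ⟨P.getD j 0 + 1, List.mem_set hj _, ?_⟩
    have := hP _ (List.getD_eq_getElem P 0 hj ▸ List.getElem_mem hj)
    omega

def coverNPreds (Q : List ℕ) : Finset (List ℕ) :=
  ((if Q.head? = some 1 then {Q.tail} else ∅) ∪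
    (if Q.getLast? = some 1 then {Q.dropLast} else ∅)) ∪
  ((Finset.range Q.length).filter (0 < Q.getD · 0)).image fun j => Q.set j (Q.getD j 0 - 1)

theorem mem_coverNPreds {P Q : List ℕ} : P ∈ coverNPreds Q ↔ coverN P Q := by
  have hprepend : Q = 1 :: P ↔ Q.head? = some 1 ∧ P = Q.tail := by
    cases Q with
    | nil => simp
    | cons q t =>
      simp only [List.cons.injEq, List.head?_cons, Option.some.injEq, List.tail_cons]
      exact and_congr_right fun _ => eq_comm
  have happend : Q = P ++ [1] ↔ Q.getLast? = some 1 ∧ P = Q.dropLast := by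
    constructor
    · rintro rfl
      simp
    · rintro ⟨h, rfl⟩
      exact (List.dropLast_append_getLast? 1 h).symm
  have hincr : (∃ j, j < P.length ∧ Q = P.set j (P.getD j 0 + 1)) ↔
      ∃ j, (j < Q.length ∧ 0 < Q.getD j 0) ∧ Q.set j (Q.getD j 0 - 1) = P := by
    constructor
    · rintro ⟨j, hj, rfl⟩
      exact ⟨j, ⟨by simpa using hj, by simp [hj]⟩, by simp [hj]⟩
    · rintro ⟨j, ⟨hj, hpos⟩, rfl⟩
      refine ⟨j, by simpa using hj, ?_⟩
      rw [List.getD_eq_getElem _ _ hj] at hpos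
      simp [hj, Nat.sub_add_cancel hpos]
  rw [coverN, hprepend, happend, hincr]
  simp only [coverNPreds, Finset.mem_union, Finset.mem_image, Finset.mem_filter,
    Finset.mem_range]
  split_ifs <;> simp only [Finset.mem_singleton, Finset.notMem_empty, true_and, false_and,
    false_or, or_assoc, *]

theorem finite_chainSet_coverN (α Q : List ℕ) : (chainSet coverN α Q).Finite :=
  chainSet_finite List.sum (fun _ _ h => by rw [sum_eq_of_coverN h]; omega)
    (fun Q => (coverNPreds Q).finite_toSet.subset fun _ hP => mem_coverNPreds.2 hP) α Q

theorem numChains_coverN (α Q : List ℕ) :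
    numChains coverN α Q =
      (if α = Q then 1 else 0) + ∑ P ∈ coverNPreds Q, numChains coverN α P :=
  ncard_chainSet _ (fun _ => mem_coverNPreds) (finite_chainSet_coverN α)

theorem ite_tail_inter_ite_dropLast (Q : List ℕ) :
    ((if Q.head? = some 1 then {Q.tail} else ∅) ∩
        (if Q.getLast? = some 1 then {Q.dropLast} else ∅) : Finset (List ℕ)) =
      if Q ≠ [] ∧ Q = List.replicate Q.length 1 then {List.replicate (Q.length - 1) 1}
      else ∅ := by
  by_cases hrep : Q ≠ [] ∧ Q = List.replicate Q.length 1
  · obtain ⟨hne, hQ⟩ := hrep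
    obtain ⟨n, hn⟩ := Nat.exists_eq_succ_of_ne_zero (List.length_pos_iff.2 hne).ne'
    rw [hQ, hn]
    simp [List.head?_replicate, List.getLast?_replicate]
  rw [if_neg hrep]
  split_ifs with hhead hlast <;> try simp only [Finset.empty_inter, Finset.inter_empty]
  refine Finset.singleton_inter_of_notMem fun heq => hrep ?_
  rw [Finset.mem_singleton] at heq
  obtain ⟨t, rfl⟩ := List.head?_eq_some_iff.1 hhead
  have hsplit := List.dropLast_append_getLast? 1 hlast
  rw [List.tail_cons] at heq
  rw [← heq] at hsplit
  refine ⟨List.cons_ne_nil _ _, ?_⟩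
  rw [List.length_cons, List.replicate_succ, ← List.eq_replicate_of_cons_eq_append hsplit.symm]

theorem IsComposition.injOn_set_sub_one {Q : List ℕ} (hQ : IsComposition Q) :
    Set.InjOn (fun j => Q.set j (Q.getD j 0 - 1)) (Finset.range Q.length) := by
  intro i hi j _ heq
  by_contra hij
  rw [Finset.mem_coe, Finset.mem_range] at hi
  have : (Q.set i (Q.getD i 0 - 1))[i]? = (Q.set j (Q.getD j 0 - 1))[i]? := congrArg (·[i]?) heq
  rw [List.getD_eq_getElem _ _ hi, List.getElem?_set_self hi, List.getElem?_set_ne (Ne.symm hij),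
    List.getElem?_eq_getElem hi, Option.some_inj] at this
  have := hQ _ (List.getElem_mem hi)
  omega

/-- The all-ones overlap of the first two kinds of predecessors is moved to the left, so that
the identity holds in `ℕ`. -/
theorem numChains_coverN_recurrence {α Q : List ℕ} (hQ : IsComposition Q) :
    numChains coverN α Q +
        (if Q ≠ [] ∧ Q = List.replicate Q.length 1 then
          numChains coverN α (List.replicate (Q.length - 1) 1) else 0) =
      (if α = Q then 1 else 0) +
        (if Q.head? = some 1 then numChains coverN α Q.tail else 0) +
        (if Q.getLast? = some 1 then numChains coverN α Q.dropLast else 0) +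
        ∑ j ∈ Finset.range Q.length, numChains coverN α (Q.set j (Q.getD j 0 - 1)) := by
  have sum_ite_singleton : ∀ (c : Prop) [Decidable c] (P : List ℕ),
      ∑ P' ∈ (if c then {P} else ∅ : Finset (List ℕ)), numChains coverN α P' =
        if c then numChains coverN α P else 0 := by
    intro c _ P
    split_ifs <;> simp
  have hpos : ∀ j ∈ Finset.range Q.length, 0 < Q.getD j 0 := fun j hj => by
    rw [List.getD_eq_getElem _ _ (Finset.mem_range.1 hj)]
    exact hQ _ (List.getElem_mem _)
  have hdisj : Disjoint
      ((if Q.head? = some 1 then {Q.tail} else ∅) ∪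
        (if Q.getLast? = some 1 then {Q.dropLast} else ∅) : Finset (List ℕ))
      ((Finset.range Q.length).image fun j => Q.set j (Q.getD j 0 - 1)) := by
    refine Finset.disjoint_right.2 fun P hP hP' => ?_
    obtain ⟨j, hj, rfl⟩ := Finset.mem_image.1 hP
    rw [Finset.mem_range] at hj
    rcases Finset.mem_union.1 hP' with h | h <;> split_ifs at h <;>
      simp only [Finset.mem_singleton, Finset.notMem_empty] at h <;>
      · have := congrArg List.length h
        simp only [List.length_set, List.length_tail, List.length_dropLast] at this
        omega
  rw [numChains_coverN, coverNPreds, Finset.filter_true_of_mem hpos, Finset.sum_union hdisj,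
    Finset.sum_image hQ.injOn_set_sub_one, ← sum_ite_singleton, ← ite_tail_inter_ite_dropLast, add_assoc,
    add_right_comm _ _ (∑ _ ∈ _ ∩ _, _), Finset.sum_union_inter, sum_ite_singleton,
    sum_ite_singleton]
  ring

theorem numChains_coverN_of_length_lt {α Q : List ℕ} (h : Q.length < α.length) :
    numChains coverN α Q = 0 :=
  numChains_eq_zero_of_invariant (α.length ≤ ·.length)
    (fun _ _ hcov hP => hP.trans (length_le_of_coverN hcov)) le_rfl (by omega)

theorem numChains_coverN_of_not_isComposition {α Q : List ℕ} (hα : IsComposition α)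
    (hQ : ¬ IsComposition Q) : numChains coverN α Q = 0 :=
  numChains_eq_zero_of_invariant IsComposition (fun _ _ hcov hP => hP.of_coverN hcov) hα hQ

theorem numChains_coverN_replicate_one (r n : ℕ) :
    numChains coverN (List.replicate r 1) (List.replicate n 1) = if r ≤ n then 1 else 0 := by
  induction n with
  | zero =>
    have := numChains_coverN_recurrence (α := List.replicate r 1) (isComposition_replicate_one 0)
    by_cases hr : r = 0 <;> simp_all
  | succ n ih =>
    have hrec := numChains_coverN_recurrence (α := List.replicate r 1)
      (isComposition_replicate_one (n + 1))
    have hdecr : ∀ j ∈ Finset.range (n + 1), numChains coverN (List.replicate r 1)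
        ((List.replicate (n + 1) 1).set j ((List.replicate (n + 1) 1).getD j 0 - 1)) = 0 := by
      intro j hj
      refine numChains_coverN_of_not_isComposition (isComposition_replicate_one r) fun h => ?_
      rw [Finset.mem_range] at hj
      have := h _ (List.mem_set (by simpa using hj) _)
      simp [hj] at this
    simp only [List.length_replicate, Finset.sum_eq_zero hdecr] at hrec
    rw [show (if r ≤ n + 1 then 1 else 0) = (if r = n + 1 then 1 else 0) + if r ≤ n then 1 else 0
      by split_ifs <;> omega]
    simpa [List.head?_replicate, List.getLast?_replicate, ih] using hrec

theorem numChains_coverN_replicate_one_of_length_le {α : List ℕ} (hα : IsComposition α) {n : ℕ}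
    (hn : α.length ≤ n) :
    numChains coverN α (List.replicate n 1) = if ∀ a ∈ α, a = 1 then 1 else 0 := by
  split_ifs with hones
  · rw [List.eq_replicate_iff.2 ⟨rfl, hones⟩, numChains_coverN_replicate_one, if_pos hn]
  push Not at hones
  obtain ⟨x, hx, hx1⟩ := hones
  refine numChains_eq_zero_of_invariant (fun P => IsComposition P ∧ ∃ x ∈ P, 2 ≤ x)
    (fun _ _ hcov hP => ⟨hP.1.of_coverN hcov, exists_two_le_of_coverN hcov hP.1 hP.2⟩)
    ⟨hα, x, hx, by have := hα x hx; omega⟩ ?_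
  rintro ⟨-, y, hy, hy2⟩
  rw [List.eq_of_mem_replicate hy] at hy2
  omega

end CoverN

section MonomialSupport

open MvPowerSeries

variable {σ R : Type*}

def HasMonomialSupport [Semiring R] (s : Finset σ) (f : MvPowerSeries σ R) : Prop :=
  ∀ m, coeff m f ≠ 0 → m.support = s

namespace HasMonomialSupport

variable {s : Finset σ}

section Semiring

variable [Semiring R] {f g : MvPowerSeries σ R}

theorem coeff_eq_zero (hf : HasMonomialSupport s f) {m : σ →₀ ℕ} (hm : m.support ≠ s) :
    coeff m f = 0 :=
  by_contra fun h => hm (hf m h)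

theorem ext (hf : HasMonomialSupport s f) (hg : HasMonomialSupport s g)
    (h : ∀ m, m.support = s → coeff m f = coeff m g) : f = g := by
  ext m
  by_cases hm : m.support = s
  · exact h m hm
  · rw [hf.coeff_eq_zero hm, hg.coeff_eq_zero hm]

theorem zero : HasMonomialSupport s (0 : MvPowerSeries σ R) := by
  intro m hm
  simp at hm

theorem add (hf : HasMonomialSupport s f) (hg : HasMonomialSupport s g) :
    HasMonomialSupport s (f + g) := by
  intro m hm
  by_contra hs
  rw [map_add, hf.coeff_eq_zero hs, hg.coeff_eq_zero hs, add_zero] at hm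
  exact hm rfl

theorem sum {ι : Type*} {t : Finset ι} {F : ι → MvPowerSeries σ R}
    (hF : ∀ i ∈ t, HasMonomialSupport s (F i)) : HasMonomialSupport s (∑ i ∈ t, F i) := by
  classical
  induction t using Finset.induction_on with
  | empty => simpa using zero
  | insert i t hi ih =>
    rw [Finset.sum_insert hi]
    exact (hF i (Finset.mem_insert_self i t)).add
      (ih fun j hj => hF j (Finset.mem_insert_of_mem hj))

theorem monomial (e : σ →₀ ℕ) (a : R) : HasMonomialSupport e.support (monomial e a) := by
  classical
  intro m hm
  rw [coeff_monomial] at hm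
  split_ifs at hm with h
  · rw [h]
  · exact absurd rfl hm

end Semiring

variable [DecidableEq σ] [CommSemiring R] {f : MvPowerSeries σ R}

theorem X_mul (hf : HasMonomialSupport s f) (i : σ) :
    HasMonomialSupport (insert i s) (X i * f) := by
  intro m hm
  rw [X_def, coeff_monomial_mul] at hm
  split_ifs at hm with hle
  · rw [one_mul] at hm
    rw [← hf _ hm, ← tsub_add_cancel_of_le hle, Finsupp.support_add_eq_union,
      add_tsub_cancel_right, Finsupp.support_single _ one_ne_zero, Finset.union_comm,
      Finset.insert_eq]
  · exact absurd rfl hm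

theorem sum_X_mul (hf : HasMonomialSupport s f) :
    HasMonomialSupport s ((∑ i ∈ s, X i) * f) := by
  rw [Finset.sum_mul]
  exact sum fun i hi => Finset.insert_eq_of_mem hi ▸ hf.X_mul i

end HasMonomialSupport

open Classical in
theorem coeff_lamPS (m : ℕ →₀ ℕ) (f : MvPowerSeries ℕ ℤ) :
    coeff m (LamPS f) = if ∀ i ∈ m.support, i ∈ Set.range (· + 1) then
      coeff (Finsupp.comapDomain (· + 1) m (add_left_injective 1).injOn) f else 0 := rfl

theorem HasMonomialSupport.lamPS {s : Finset ℕ} {f : MvPowerSeries ℕ ℤ}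
    (hf : HasMonomialSupport s f) : HasMonomialSupport (s.image (· + 1)) (LamPS f) := by
  classical
  intro m hm
  rw [coeff_lamPS] at hm
  split_ifs at hm with hrange
  swap
  · exact absurd rfl hm
  ext (_ | i)
  · simpa using fun h0 => hrange 0 (Finsupp.mem_support_iff.2 h0)
  · rw [Finset.mem_image, ← hf _ hm]
    simp

theorem HasMonomialSupport.X_one_mul_lamPS {n : ℕ} {f : MvPowerSeries ℕ ℤ}
    (hf : HasMonomialSupport (Finset.Icc 1 n) f) :
    HasMonomialSupport (Finset.Icc 1 (n + 1)) (X 1 * LamPS f) := by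
  have := hf.lamPS.X_mul 1
  rwa [Finset.image_add_right_Icc, Finset.insert_Icc_add_one_left_eq_Icc (by omega)] at this

theorem HasMonomialSupport.X_add_one_mul [CommSemiring R] {n : ℕ}
    {f : MvPowerSeries ℕ R} (hf : HasMonomialSupport (Finset.Icc 1 n) f) :
    HasMonomialSupport (Finset.Icc 1 (n + 1)) (X (n + 1) * f) := by
  have := hf.X_mul (n + 1)
  rwa [Finset.insert_Icc_right_eq_Icc_add_one (by omega)] at this

end MonomialSupport

section Exponent

open MvPowerSeries

/-- Variables are indexed from 1, so the monomial `x_1^{q_1} ⋯ x_k^{q_k}` has exponent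
`(0, q_1, …, q_k)`. -/
def exponentOf (Q : List ℕ) : ℕ →₀ ℕ := (0 :: Q).toFinsupp

@[simp]
theorem exponentOf_zero (Q : List ℕ) : exponentOf Q 0 = 0 := rfl

@[simp]
theorem exponentOf_succ (Q : List ℕ) (i : ℕ) : exponentOf Q (i + 1) = Q.getD i 0 := by
  simp [exponentOf, List.toFinsupp_apply]

theorem exponentOf_nil : exponentOf [] = 0 := by
  ext (_ | i) <;> simp

theorem support_exponentOf {Q : List ℕ} (hQ : IsComposition Q) :
    (exponentOf Q).support = Finset.Icc 1 Q.length := by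
  ext (_ | i)
  · simp
  · rw [Finsupp.mem_support_iff, exponentOf_succ, Finset.mem_Icc]
    constructor
    · intro h
      have : i < Q.length := by
        by_contra hi
        exact h (List.getD_eq_default _ _ (not_lt.1 hi))
      omega
    · intro h
      rw [List.getD_eq_getElem _ _ (by omega)]
      exact (hQ _ (List.getElem_mem _)).ne'

theorem exists_eq_exponentOf {m : ℕ →₀ ℕ} {k : ℕ} (hm : m.support = Finset.Icc 1 k) :
    ∃ Q, IsComposition Q ∧ Q.length = k ∧ exponentOf Q = m := by
  have hmem : ∀ i, m i ≠ 0 ↔ 1 ≤ i ∧ i ≤ k := fun i => by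
    rw [← Finsupp.mem_support_iff, hm, Finset.mem_Icc]
  refine ⟨(List.range k).map (fun i => m (i + 1)), ?_, by simp, ?_⟩
  · simp only [IsComposition, List.mem_map, List.mem_range]
    rintro _ ⟨i, hi, rfl⟩
    exact Nat.pos_of_ne_zero ((hmem _).2 ⟨by omega, by omega⟩)
  · ext (_ | i)
    · rw [exponentOf_zero]
      exact (not_not.1 ((hmem 0).not.2 (by omega))).symm
    · rw [exponentOf_succ]
      by_cases hi : i < k
      · simp [hi]
      · rw [List.getD_eq_default _ _ (by simpa using hi)]
        exact (not_not.1 ((hmem _).not.2 (by omega))).symm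

theorem eq_of_exponentOf_eq {P Q : List ℕ} (hP : IsComposition P) (hQ : IsComposition Q)
    (h : exponentOf P = exponentOf Q) : P = Q := by
  have hlen : P.length = Q.length := by
    have hsupp := support_exponentOf hP
    rw [h, support_exponentOf hQ] at hsupp
    simpa using congrArg Finset.card hsupp.symm
  refine List.ext_getElem hlen fun i hP hQ => ?_
  have := DFunLike.congr_fun h (i + 1)
  rwa [exponentOf_succ, exponentOf_succ, List.getD_eq_getElem _ _ hP,
    List.getD_eq_getElem _ _ hQ] at this

theorem exponentOf_eq_single_add {Q : List ℕ} {j : ℕ} (hj : j < Q.length)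
    (hpos : 0 < Q.getD j 0) :
    exponentOf Q = Finsupp.single (j + 1) 1 + exponentOf (Q.set j (Q.getD j 0 - 1)) := by
  ext (_ | i)
  · simp
  · rw [Finsupp.add_apply, exponentOf_succ, exponentOf_succ, Finsupp.single_apply]
    rw [List.getD_eq_getElem _ _ hj] at hpos
    by_cases hij : j = i
    · subst hij
      rw [if_pos rfl, List.getD_eq_getElem _ _ hj, List.getD_eq_getElem _ _ (by simpa using hj),
        List.getElem_set_self]
      omega
    · simp [hij]

theorem exponentOf_append_zero (Q : List ℕ) : exponentOf (Q ++ [0]) = exponentOf Q := by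
  ext (_ | i)
  · simp
  · rw [exponentOf_succ, exponentOf_succ]
    by_cases hi : i < Q.length
    · exact List.getD_append _ _ _ _ hi
    · rw [List.getD_append_right _ _ _ _ (not_lt.1 hi), List.getD_eq_default _ _ (not_lt.1 hi),
        List.getD_eq_getElem?_getD, List.getElem?_getD_singleton_default_eq]

theorem vPS_eq_monomial (Q : List ℕ) : vPS Q = monomial (exponentOf Q) 1 := by
  simp_rw [vPS, X_pow_eq, prod_monomial, Finset.prod_const_one]
  refine congrArg (monomial · 1) (Finsupp.ext fun j => ?_)
  rw [Finsupp.finsetSum_apply]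
  rcases j with _ | j
  · simp
  · rw [exponentOf_succ]
    simp only [Finsupp.single_apply, add_left_inj, Finset.sum_ite_eq', Finset.mem_range]
    split_ifs with hj
    · rfl
    · exact (List.getD_eq_default _ _ (not_lt.1 hj)).symm

theorem hasMonomialSupport_vPS {Q : List ℕ} (hQ : IsComposition Q) :
    HasMonomialSupport (Finset.Icc 1 Q.length) (vPS Q) :=
  vPS_eq_monomial Q ▸ support_exponentOf hQ ▸ HasMonomialSupport.monomial _ _

theorem coeff_exponentOf_vPS {P Q : List ℕ} (hP : IsComposition P) (hQ : IsComposition Q) :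
    coeff (exponentOf Q) (vPS P) = if Q = P then 1 else 0 := by
  rw [vPS_eq_monomial, coeff_monomial]
  exact if_congr ⟨eq_of_exponentOf_eq hQ hP, congrArg _⟩ rfl rfl

theorem prod_X_Icc (k : ℕ) :
    ∏ i ∈ Finset.Icc 1 k, (X i : MvPowerSeries ℕ ℤ) = vPS (List.replicate k 1) := by
  rw [vPS, List.length_replicate, Finset.range_eq_Ico, ← Finset.Ico_add_one_right_eq_Icc,
    ← Finset.prod_Ico_add' _ 0 k 1]
  refine Finset.prod_congr rfl fun i hi => ?_
  simp [(Finset.mem_Ico.1 hi).2]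

theorem hasMonomialSupport_prod_X_Icc (k : ℕ) :
    HasMonomialSupport (Finset.Icc 1 k) (∏ i ∈ Finset.Icc 1 k, (X i : MvPowerSeries ℕ ℤ)) := by
  simpa [prod_X_Icc] using hasMonomialSupport_vPS (isComposition_replicate_one k)

end Exponent

section GenF

open MvPowerSeries

open Classical in
theorem coeff_genF (cover : List ℕ → List ℕ → Prop) (α : List ℕ) (k : ℕ) (m : ℕ →₀ ℕ) :
    coeff m (genF cover α k) =
      if ∀ i, m i ≠ 0 ↔ 1 ≤ i ∧ i ≤ k then
        (numChains cover α ((List.range k).map fun i => m (i + 1)) : ℤ)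
      else 0 := rfl

theorem hasMonomialSupport_genF (cover : List ℕ → List ℕ → Prop) (α : List ℕ) (k : ℕ) :
    HasMonomialSupport (Finset.Icc 1 k) (genF cover α k) := by
  intro m hm
  rw [coeff_genF] at hm
  split_ifs at hm with h
  · ext i
    rw [Finsupp.mem_support_iff, h, Finset.mem_Icc]
  · exact absurd rfl hm

theorem coeff_exponentOf_genF (cover : List ℕ → List ℕ → Prop) (α : List ℕ) {Q : List ℕ}
    (hQ : IsComposition Q) :
    coeff (exponentOf Q) (genF cover α Q.length) = numChains cover α Q := by
  rw [coeff_genF, if_pos fun i => by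
    rw [← Finsupp.mem_support_iff, support_exponentOf hQ, Finset.mem_Icc]]
  congr
  refine List.ext_getElem (by simp) fun i _ hi => ?_
  simp [hi]

theorem coeff_exponentOf_genF_coverN {α : List ℕ} (hα : IsComposition α) (Q : List ℕ) :
    coeff (exponentOf Q) (genF coverN α Q.length) = numChains coverN α Q := by
  by_cases hQ : IsComposition Q
  · exact coeff_exponentOf_genF coverN α hQ
  rw [numChains_coverN_of_not_isComposition hα hQ, Nat.cast_zero]
  refine (hasMonomialSupport_genF coverN α _).coeff_eq_zero fun h => hQ fun x hx => ?_
  obtain ⟨i, hi, rfl⟩ := List.getElem_of_mem hx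
  have : i + 1 ∈ (exponentOf Q).support := h ▸ Finset.mem_Icc.2 ⟨by omega, by omega⟩
  rw [Finsupp.mem_support_iff, exponentOf_succ, List.getD_eq_getElem _ _ hi] at this
  exact Nat.pos_of_ne_zero this

theorem coeff_exponentOf_lamPS (L : List ℕ) (f : MvPowerSeries ℕ ℤ) :
    coeff (exponentOf L) (LamPS f) = coeff L.toFinsupp f := by
  rw [coeff_lamPS, if_pos]
  · congr
    ext i
    simp [List.toFinsupp_apply]
  · rintro (_ | i) hi
    · simp at hi
    · exact ⟨i, rfl⟩

theorem coeff_exponentOf_X_mul {Q : List ℕ} {j : ℕ} (hj : j < Q.length) (hpos : 0 < Q.getD j 0)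
    (f : MvPowerSeries ℕ ℤ) :
    coeff (exponentOf Q) (X (j + 1) * f) = coeff (exponentOf (Q.set j (Q.getD j 0 - 1))) f := by
  rw [exponentOf_eq_single_add hj hpos, X_def, coeff_add_monomial_mul, one_mul]

theorem coeff_exponentOf_sum_X_mul_genF {α : List ℕ} (hα : IsComposition α) {Q : List ℕ}
    (hQ : IsComposition Q) :
    coeff (exponentOf Q) ((∑ i ∈ Finset.Icc 1 Q.length, X i) * genF coverN α Q.length) =
      ∑ j ∈ Finset.range Q.length, (numChains coverN α (Q.set j (Q.getD j 0 - 1)) : ℤ) := by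
  rw [Finset.sum_mul, map_sum, ← Finset.Ico_add_one_right_eq_Icc, Finset.range_eq_Ico,
    ← Finset.sum_Ico_add' _ 0 Q.length 1]
  refine Finset.sum_congr rfl fun j hj => ?_
  have hj : j < Q.length := (Finset.mem_Ico.1 hj).2
  rw [coeff_exponentOf_X_mul hj, ← coeff_exponentOf_genF_coverN hα, List.length_set]
  rw [List.getD_eq_getElem _ _ hj]
  exact hQ _ (List.getElem_mem hj)

theorem coeff_exponentOf_X_one_mul_lamPS_genF {α : List ℕ} (hα : IsComposition α) {Q : List ℕ}
    (hQ : IsComposition Q) :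
    coeff (exponentOf Q) (X 1 * LamPS (genF coverN α (Q.length - 1))) =
      if Q.head? = some 1 then (numChains coverN α Q.tail : ℤ) else 0 := by
  rcases Q with _ | ⟨q, t⟩
  · simp [exponentOf_nil, coeff_zero_X_mul]
  have hq : 0 < q := hQ q List.mem_cons_self
  rw [coeff_exponentOf_X_mul (j := 0) (by simp) (by simpa), coeff_exponentOf_lamPS]
  simp only [List.getD_cons_zero, List.set_cons_zero, List.head?_cons, List.tail_cons,
    List.length_cons, Nat.add_sub_cancel, Option.some.injEq]
  split_ifs with hq1
  · subst hq1
    exact coeff_exponentOf_genF_coverN hα t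
  · refine (hasMonomialSupport_genF coverN α _).coeff_eq_zero fun h => ?_
    have : 0 ∈ ((q - 1) :: t).toFinsupp.support := by
      rw [Finsupp.mem_support_iff, List.toFinsupp_apply, List.getD_cons_zero]
      omega
    simp [h] at this

theorem coeff_exponentOf_X_mul_genF_dropLast {α : List ℕ} (hα : IsComposition α) {Q : List ℕ}
    (hQ : IsComposition Q) :
    coeff (exponentOf Q) (X Q.length * genF coverN α (Q.length - 1)) =
      if Q.getLast? = some 1 then (numChains coverN α Q.dropLast : ℤ) else 0 := by
  rcases List.eq_nil_or_concat' Q with rfl | ⟨t, q, rfl⟩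
  · simp [exponentOf_nil, coeff_zero_X_mul]
  have hq : 0 < q := hQ q (by simp)
  have hlast : t.length < (t ++ [q]).length := by simp
  rw [List.length_append, List.length_singleton, Nat.add_sub_cancel,
    coeff_exponentOf_X_mul hlast (by simpa using hq)]
  simp only [List.getD_append_right _ _ _ _ le_rfl, Nat.sub_self, List.getD_cons_zero,
    List.set_append_right _ _ le_rfl, List.set_cons_zero, List.getLast?_concat,
    List.dropLast_concat, Option.some.injEq]
  split_ifs with hq1
  · subst hq1
    rw [exponentOf_append_zero]
    exact coeff_exponentOf_genF_coverN hα t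
  · refine (hasMonomialSupport_genF coverN α _).coeff_eq_zero fun h => ?_
    have : t.length + 1 ∈ (exponentOf (t ++ [q - 1])).support := by
      rw [Finsupp.mem_support_iff, exponentOf_succ, List.getD_append_right _ _ _ _ le_rfl,
        Nat.sub_self, List.getD_cons_zero]
      omega
    simp [h] at this

end GenF

section Recursion

open MvPowerSeries

theorem genF_coverN_of_lt {α : List ℕ} {k : ℕ} (hk : k < α.length) : genF coverN α k = 0 :=
  (hasMonomialSupport_genF coverN α k).ext HasMonomialSupport.zero fun m hm => by
    obtain ⟨Q, hQ, rfl, rfl⟩ := exists_eq_exponentOf hm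
    rw [coeff_exponentOf_genF coverN α hQ, numChains_coverN_of_length_lt hk, Nat.cast_zero,
      map_zero]

theorem genF_coverN_length {α : List ℕ} (hα : IsComposition α) :
    genF coverN α α.length =
      vPS α + (∑ i ∈ Finset.Icc 1 α.length, X i) * genF coverN α α.length := by
  have hgen := hasMonomialSupport_genF coverN α α.length
  refine hgen.ext ((hasMonomialSupport_vPS hα).add hgen.sum_X_mul) fun m hm => ?_
  obtain ⟨Q, hQ, hlen, rfl⟩ := exists_eq_exponentOf hm
  rw [← hlen, map_add, coeff_exponentOf_genF coverN α hQ, coeff_exponentOf_vPS hα hQ,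
    coeff_exponentOf_sum_X_mul_genF hα hQ]
  have hrec := numChains_coverN_recurrence (α := α) hQ
  rcases eq_or_ne Q [] with rfl | hne
  · obtain rfl : α = [] := List.length_eq_zero_iff.1 hlen.symm
    simpa using hrec
  have hshort : ∀ P : List ℕ, P.length = Q.length - 1 → numChains coverN α P = 0 :=
    fun P hP => numChains_coverN_of_length_lt (by have := List.length_pos_iff.2 hne; omega)
  rw [hshort (List.replicate (Q.length - 1) 1) (by simp), hshort Q.tail (by simp),
    hshort Q.dropLast (by simp)] at hrec
  simp only [ite_self, add_zero, eq_comm (a := α)] at hrec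
  exact_mod_cast hrec

theorem genF_coverN_add_ite_prod {α : List ℕ} (hα : IsComposition α) {k : ℕ}
    (hk : α.length < k) :
    genF coverN α k + (if ∀ a ∈ α, a = 1 then ∏ i ∈ Finset.Icc 1 k, X i else 0) =
      X 1 * LamPS (genF coverN α (k - 1)) + X k * genF coverN α (k - 1) +
        (∑ i ∈ Finset.Icc 1 k, X i) * genF coverN α k := by
  obtain ⟨n, rfl⟩ : ∃ n, k = n + 1 := ⟨k - 1, by omega⟩
  rw [Nat.add_sub_cancel]
  have hgen := hasMonomialSupport_genF coverN α
  have hprod : HasMonomialSupport (Finset.Icc 1 (n + 1))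
      (if ∀ a ∈ α, a = 1 then ∏ i ∈ Finset.Icc 1 (n + 1), (X i : MvPowerSeries ℕ ℤ) else 0) := by
    split_ifs
    exacts [hasMonomialSupport_prod_X_Icc _, HasMonomialSupport.zero]
  refine ((hgen _).add hprod).ext
    (((hgen n).X_one_mul_lamPS.add (hgen n).X_add_one_mul).add (hgen _).sum_X_mul)
    fun m hm => ?_
  obtain ⟨Q, hQ, hlen, rfl⟩ := exists_eq_exponentOf hm
  rw [← hlen, show n = Q.length - 1 by omega]
  simp only [map_add, apply_ite (coeff _), map_zero]
  rw [coeff_exponentOf_genF coverN α hQ, prod_X_Icc,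
    coeff_exponentOf_vPS (isComposition_replicate_one _) hQ,
    coeff_exponentOf_X_one_mul_lamPS_genF hα hQ, coeff_exponentOf_X_mul_genF_dropLast hα hQ,
    coeff_exponentOf_sum_X_mul_genF hα hQ]
  have hrec := numChains_coverN_recurrence (α := α) hQ
  have hne : Q ≠ [] := List.ne_nil_of_length_pos (by omega)
  rw [numChains_coverN_replicate_one_of_length_le hα (by omega),
    if_neg (show α ≠ Q by rintro rfl; omega), zero_add] at hrec
  simp only [ne_eq, hne, not_false_eq_true, true_and] at hrec
  have hrecℤ := congrArg (Nat.cast : ℕ → ℤ) hrec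
  push_cast at hrecℤ
  rw [← hrecℤ]
  split_ifs <;> simp

end Recursion

open MvPowerSeries in
theorem stmt4 (α : List ℕ) (hα : IsComposition α) (r : ℕ) (hr : α.length = r) :
    (∀ k, k < r → genF coverN α k = 0) ∧
    (genF coverN α r =
      vPS α + (∑ i ∈ Finset.Icc 1 r, (X i : MvPowerSeries ℕ ℤ)) * genF coverN α r) ∧
    (∀ k, r < k → ¬(∀ a ∈ α, a = 1) →
      genF coverN α k =
        X 1 * LamPS (genF coverN α (k - 1)) + X k * genF coverN α (k - 1) +
          (∑ i ∈ Finset.Icc 1 k, (X i : MvPowerSeries ℕ ℤ)) * genF coverN α k) ∧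
    (∀ k, r < k → (∀ a ∈ α, a = 1) →
      genF coverN α k =
        X 1 * LamPS (genF coverN α (k - 1)) + X k * genF coverN α (k - 1) +
          (∑ i ∈ Finset.Icc 1 k, (X i : MvPowerSeries ℕ ℤ)) * genF coverN α k -
          ∏ i ∈ Finset.Icc 1 k, (X i : MvPowerSeries ℕ ℤ)) := by
  subst hr
  refine ⟨fun k hk => genF_coverN_of_lt hk, genF_coverN_length hα, fun k hk hones => ?_,
    fun k hk hones => ?_⟩
  · simpa [hones] using genF_coverN_add_ite_prod hα hk
  · rw [← genF_coverN_add_ite_prod hα hk, if_pos hones, add_sub_cancel_right]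
end
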